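/- (Helly theorem for compact-valued increasing functions) Let Ω be a bounded open subset of ℝ² and let (K_n) be a sequence of increasing functions from [0,1] into 𝒦(Ω̄). Then there exist a subsequence (K_{n_j}) and an increasing function K: [0,1] → 𝒦(Ω̄) such that K_{n_j}(t) → K(t) in the Hausdorff metric for every t ∈ [0,1]. -/

import Mathlib

open MeasureTheory Filter Set
open scoped Classical

noncomputable section

/-- The plane `ℝ²`. -/
abbrev E2 : Type := EuclideanSpace ℝ (Fin 2)

/-- Distance from a point to a set, with the convention `dist(x, ∅) = diam Ω`. -/
def distIn (Ω : Set E2) (x : E2) (S : Set E2) : ℝ :=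
  if S = ∅ then Metric.diam Ω else Metric.infDist x S

/-- Hausdorff distance between subsets of `closure Ω`, with the conventions
`dist(x, ∅) = diam Ω` and `sup ∅ = 0`. -/
def hausDistIn (Ω K₁ K₂ : Set E2) : ℝ :=
  max (sSup ((fun x => distIn Ω x K₂) '' K₁)) (sSup ((fun x => distIn Ω x K₁) '' K₂))

/-- Convergence of a sequence of compact subsets of `closure Ω` in the Hausdorff metric. -/
def TendstoHausdorff (Ω : Set E2) (K : ℕ → Set E2) (L : Set E2) : Prop :=
  Filter.Tendsto (fun n => hausDistIn Ω (K n) L) Filter.atTop (nhds 0)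

/-- `K` has at most `m` connected components: it is the union of `m` preconnected sets. -/
def AtMostComponents (m : ℕ) (K : Set E2) : Prop :=
  ∃ C : Fin m → Set E2, (∀ i, IsPreconnected (C i)) ∧ K = ⋃ i, C i

/-!
By compactness of the hyperspace of compact subsets of `closure Ω`, a diagonal extraction gives a
subsequence converging at every rational time, and since inclusion is a closed relation the limits
`L q` increase with `q`. Call `t` an `ε`-jump if `L q₁` and `L q₂` stay more than `ε` apart for all
rationals `q₁ < t < q₂`. At an `ε`-jump the compact sets `L q₂ ∩ {x | ε ≤ infEDist x (L q₁)}` form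
a directed family, so some point of `⋂_{q > t} L q` is `ε`-far from every `L q` with `q < t`; these
points are `ε`-separated for distinct jumps, so each compact set has finitely many `ε`-jumps.
A second extraction takes care of the countably many jumps, and at any other time `K n t`, squeezed
between `K n q₁` and `K n q₂`, converges to `⋂_{q > t} L q`.
-/

open Metric TopologicalSpace Topology
open scoped ENNReal NNReal

theorem Metric.hausdorffEDist_le_of_subset_of_subset {α : Type*} [PseudoEMetricSpace α]
    {A B C A' B' C' : Set α} (hAB : A ⊆ B) (hBC : B ⊆ C) (hAB' : A' ⊆ B') (hBC' : B' ⊆ C') :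
    hausdorffEDist B B' ≤ hausdorffEDist A A' + hausdorffEDist A' C' + hausdorffEDist C C' := by
  refine hausdorffEDist_le_of_infEDist (fun x hx => ?_) (fun y hy => ?_)
  · calc infEDist x B' ≤ infEDist x A' := infEDist_anti hAB'
      _ ≤ infEDist x C' + hausdorffEDist C' A' := infEDist_le_infEDist_add_hausdorffEDist
      _ ≤ hausdorffEDist C C' + hausdorffEDist A' C' := by
        rw [hausdorffEDist_comm (s := C')]
        gcongr
        exact infEDist_le_hausdorffEDist_of_mem (hBC hx)
      _ ≤ _ := by rw [add_comm]; gcongr; exact le_add_self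
  · calc infEDist y B ≤ infEDist y A := infEDist_anti hAB
      _ ≤ infEDist y A' + hausdorffEDist A' A := infEDist_le_infEDist_add_hausdorffEDist
      _ ≤ hausdorffEDist A' C' + hausdorffEDist A A' := by
        rw [hausdorffEDist_comm (s := A') (t := A), hausdorffEDist_comm (s := A') (t := C')]
        gcongr
        exact infEDist_le_hausdorffEDist_of_mem (hBC' hy)
      _ ≤ _ := by rw [add_comm]; exact le_self_add

theorem Metric.IsSeparated.finite_of_isCompact {α : Type*} [PseudoMetricSpace α] {ε : ℝ≥0}
    {C X : Set α} (hε : ε ≠ 0) (hX : IsCompact X) (hCX : C ⊆ X) (hC : IsSeparated ε C) :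
    C.Finite := by
  obtain ⟨N, -, hN, hcover⟩ :=
    exists_finite_isCover_of_isCompact (half_pos (pos_iff_ne_zero.2 hε)).ne' hX
  rw [← Set.encard_lt_top_iff]
  calc C.encard ≤ packingNumber (2 * (ε / 2)) X := by
        rw [mul_div_cancel₀ _ two_ne_zero]; exact hC.encard_le_packingNumber hCX
    _ ≤ externalCoveringNumber (ε / 2) X := packingNumber_two_mul_le_externalCoveringNumber _ _
    _ ≤ N.encard := hcover.externalCoveringNumber_le_encard
    _ < ⊤ := hN.encard_lt_top

theorem IsCompact.exists_strictMono_tendsto_pi {X ι : Type*} [TopologicalSpace X]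
    [FirstCountableTopology X] [Countable ι] {s : Set X} (hs : IsCompact s) (u : ℕ → ι → X)
    (hu : ∀ n i, u n i ∈ s) :
    ∃ φ : ℕ → ℕ, StrictMono φ ∧ ∃ a : ι → X, ∀ i, a i ∈ s ∧
      Tendsto (fun n => u (φ n) i) atTop (𝓝 (a i)) := by
  obtain ⟨a, ha, φ, hφ, h⟩ := (isCompact_univ_pi fun _ : ι => hs).tendsto_subseq
    (x := u) fun n => Set.mem_univ_pi.2 (hu n)
  exact ⟨φ, hφ, a, fun i => ⟨ha i (Set.mem_univ i), tendsto_pi_nhds.1 h i⟩⟩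

namespace TopologicalSpace.Compacts

instance {α : Type*} [TopologicalSpace α] [T2Space α] : OrderClosedTopology (Compacts α) where
  isClosed_le' := by
    rw [← isOpen_compl_iff, isOpen_iff_forall_mem_open]
    rintro ⟨K, L⟩ hKL
    obtain ⟨x, hxK, hxL⟩ := Set.not_subset.1 hKL
    obtain ⟨U, V, hU, hV, hxU, hLV, hUV⟩ := SeparatedNhds.of_isCompact_isCompact
      isCompact_singleton L.isCompact (Set.disjoint_singleton_left.2 hxL)
    refine ⟨{K' : Compacts α | (↑K' ∩ U).Nonempty} ×ˢ {L' : Compacts α | ↑L' ⊆ V}, ?_,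
      (isOpen_inter_nonempty_of_isOpen hU).prod (isOpen_subsets_of_isOpen hV),
      ⟨x, hxK, hxU rfl⟩, hLV⟩
    rintro ⟨K', L'⟩ ⟨⟨y, hyK, hyU⟩, hL'V⟩ hle
    exact hUV.ne_of_mem hyU (hL'V (hle hyK)) rfl

variable {α : Type*} [MetricSpace α]

def jumpSet (L : ℚ → Compacts α) (ε : ℝ≥0∞) : Set ℝ :=
  {t | ∀ q₁ q₂ : ℚ, (q₁ : ℝ) < t → t < q₂ → ε < edist (L q₁) (L q₂)}

theorem jumpSet_anti (L : ℚ → Compacts α) : Antitone (jumpSet L) :=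
  fun _ _ hεδ _ ht q₁ q₂ h₁ h₂ => hεδ.trans_lt (ht q₁ q₂ h₁ h₂)

theorem exists_forall_le_infEDist_of_mem_jumpSet {L : ℚ → Compacts α} (hL : Monotone L)
    {ε : ℝ≥0∞} {t : ℝ} (ht : t ∈ jumpSet L ε) :
    ∃ x, (∀ q : ℚ, t < q → x ∈ L q) ∧ ∀ q : ℚ, (q : ℝ) < t → ε ≤ infEDist x (L q) := by
  let F : {p : ℚ × ℚ // (p.1 : ℝ) < t ∧ t < p.2} → Set α :=
    fun p => L p.1.2 ∩ {x | ε ≤ infEDist x (L p.1.1)}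
  have hfar_closed : ∀ q, IsClosed {x : α | ε ≤ infEDist x (L q)} :=
    fun q => isClosed_le continuous_const continuous_infEDist
  have hF_nonempty : ∀ p, (F p).Nonempty := by
    rintro ⟨⟨q₁, q₂⟩, h₁, h₂⟩
    by_contra! hF
    refine (ht q₁ q₂ h₁ h₂).not_ge (hausdorffEDist_le_of_infEDist (fun x hx => ?_) fun x hx => ?_)
    · rw [infEDist_zero_of_mem (hL (Rat.cast_lt.1 (h₁.trans h₂)).le hx)]
      exact zero_le
    · exact (not_le.1 fun h => hF.subset ⟨hx, h⟩).le
  have hF_directed : Directed (· ⊇ ·) F := by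
    rintro ⟨⟨q₁, q₂⟩, h₁, h₂⟩ ⟨⟨q₁', q₂'⟩, h₁', h₂'⟩
    refine ⟨⟨⟨max q₁ q₁', min q₂ q₂'⟩, by push_cast; exact max_lt h₁ h₁',
      by push_cast; exact lt_min h₂ h₂'⟩, ?_, ?_⟩ <;>
    · rintro x ⟨hx₂, hx₁⟩
      exact ⟨hL (by simp) hx₂, hx₁.trans (infEDist_anti (hL (by simp)))⟩
  have : Nonempty {p : ℚ × ℚ // (p.1 : ℝ) < t ∧ t < p.2} :=
    let ⟨q₁, h₁⟩ := exists_rat_lt t; let ⟨q₂, h₂⟩ := exists_rat_gt t; ⟨⟨⟨q₁, q₂⟩, h₁, h₂⟩⟩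
  obtain ⟨x, hx⟩ := IsCompact.nonempty_iInter_of_directed_nonempty_isCompact_isClosed F
    hF_directed hF_nonempty (fun p => (L p.1.2).isCompact.inter_right (hfar_closed _))
    (fun p => (L p.1.2).isCompact.isClosed.inter (hfar_closed _))
  rw [Set.mem_iInter] at hx
  refine ⟨x, fun q hq => ?_, fun q hq => ?_⟩
  · obtain ⟨q₁, h₁⟩ := exists_rat_lt t
    exact (hx ⟨⟨q₁, q⟩, h₁, hq⟩).1
  · obtain ⟨q₂, h₂⟩ := exists_rat_gt t
    exact (hx ⟨⟨q, q₂⟩, hq, h₂⟩).2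

theorem finite_jumpSet {X : Set α} (hX : IsCompact X) {L : ℚ → Compacts α} (hL : Monotone L)
    (hLX : ∀ q, (L q : Set α) ⊆ X) {ε : ℝ≥0∞} (hε : ε ≠ 0) : (jumpSet L ε).Finite := by
  set J := jumpSet L ε
  obtain h | ⟨t₀, ht₀⟩ := J.eq_empty_or_nonempty
  · simp [h]
  have : Nonempty α := let ⟨x, _⟩ := exists_forall_le_infEDist_of_mem_jumpSet hL ht₀; ⟨x⟩
  choose! x hx_mem hx_far using fun t (ht : t ∈ J) => exists_forall_le_infEDist_of_mem_jumpSet hL ht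
  have hx_sep : ∀ s ∈ J, ∀ t ∈ J, s < t → ε ≤ edist (x s) (x t) := by
    intro s hs t ht hst
    obtain ⟨r, hsr, hrt⟩ := exists_rat_btwn hst
    rw [edist_comm]
    exact (hx_far t ht r hrt).trans (infEDist_le_edist_of_mem (hx_mem s hs r hsr))
  obtain ⟨δ, hδ, hδε⟩ := ENNReal.lt_iff_exists_nnreal_btwn.1 (pos_iff_ne_zero.2 hε)
  have hx_sep' : ∀ s ∈ J, ∀ t ∈ J, s ≠ t → (δ : ℝ≥0∞) < edist (x s) (x t) := by
    intro s hs t ht hst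
    refine hδε.trans_le ?_
    rcases hst.lt_or_gt with h | h
    · exact hx_sep s hs t ht h
    · exact edist_comm (x s) (x t) ▸ hx_sep t ht s hs h
  have hx_inj : Set.InjOn x J := fun s hs t ht hxst => by
    by_contra hst
    simpa [hxst] using hx_sep' s hs t ht hst
  refine Set.Finite.of_finite_image ?_ hx_inj
  refine IsSeparated.finite_of_isCompact (pos_iff_ne_zero.1 (ENNReal.coe_pos.1 hδ)) hX ?_ ?_
  · rintro _ ⟨t, ht, rfl⟩
    obtain ⟨q, hq⟩ := exists_rat_gt t
    exact hLX q (hx_mem t ht q hq)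
  · rintro _ ⟨s, hs, rfl⟩ _ ⟨t, ht, rfl⟩ hst
    exact hx_sep' s hs t ht fun h => hst (h ▸ rfl)

theorem tendsto_of_forall_notMem_jumpSet {M : ℕ → ℝ → Compacts α} (hM : ∀ n, Monotone (M n))
    {L : ℚ → Compacts α} (hL : ∀ q : ℚ, Tendsto (fun n => M n q) atTop (𝓝 (L q))) {t : ℝ}
    (ht : ∀ ε ≠ 0, t ∉ jumpSet L ε) {C : Compacts α}
    (hC : ∀ q : ℚ, ((q : ℝ) < t → L q ≤ C) ∧ (t < q → C ≤ L q)) :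
    Tendsto (fun n => M n t) atTop (𝓝 C) := by
  rw [tendsto_iff_edist_tendsto_0]
  refine ENNReal.tendsto_nhds_zero.2 fun ε hε => ?_
  have hε₃ : ε / 3 ≠ 0 := (ENNReal.div_pos hε.ne' ENNReal.ofNat_ne_top).ne'
  obtain ⟨q₁, q₂, h₁, h₂, hL₁₂⟩ :
      ∃ q₁ q₂ : ℚ, (q₁ : ℝ) < t ∧ t < q₂ ∧ edist (L q₁) (L q₂) ≤ ε / 3 := by
    simpa [jumpSet] using ht (ε / 3) hε₃
  have hM_near : ∀ q : ℚ, ∀ᶠ n in atTop, edist (M n q) (L q) ≤ ε / 3 := fun q =>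
    ENNReal.tendsto_nhds_zero.1 (tendsto_iff_edist_tendsto_0.1 (hL q)) _ (pos_iff_ne_zero.2 hε₃)
  filter_upwards [hM_near q₁, hM_near q₂] with n hn₁ hn₂
  calc edist (M n t) C
      ≤ edist (M n q₁) (L q₁) + edist (L q₁) (L q₂) + edist (M n q₂) (L q₂) :=
        hausdorffEDist_le_of_subset_of_subset (hM n h₁.le) (hM n h₂.le) ((hC q₁).1 h₁)
          ((hC q₂).2 h₂)
    _ ≤ ε / 3 + ε / 3 + ε / 3 := by gcongr
    _ = ε := ENNReal.add_thirds ε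

theorem exists_strictMono_tendsto_of_monotone {X : Set α} (hX : IsCompact X)
    (K : ℕ → ℝ → Compacts α) (hKX : ∀ n t, (K n t : Set α) ⊆ X) (hK : ∀ n, Monotone (K n)) :
    ∃ φ : ℕ → ℕ, StrictMono φ ∧ ∃ L : ℝ → Compacts α, (∀ t, (L t : Set α) ⊆ X) ∧ Monotone L ∧
      ∀ t, Tendsto (fun n => K (φ n) t) atTop (𝓝 (L t)) := by
  have hS := Compacts.isCompact_subsets_of_isCompact hX
  obtain ⟨φ₁, hφ₁, L₀, hL₀⟩ := hS.exists_strictMono_tendsto_pi (fun n (q : ℚ) => K n q)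
    fun n q => hKX n q
  have hL₀_mono : Monotone L₀ := fun q q' hqq' =>
    le_of_tendsto_of_tendsto' (hL₀ q).2 (hL₀ q').2 fun n => hK _ (Rat.cast_le.2 hqq')
  set J := ⋃ n : ℕ, jumpSet L₀ (n : ℝ≥0∞)⁻¹
  have : Countable J := Set.Countable.to_subtype <| Set.countable_iUnion fun n =>
    (finite_jumpSet hX hL₀_mono (fun q => (hL₀ q).1) (by simp)).countable
  obtain ⟨φ₂, hφ₂, L₁, hL₁⟩ := hS.exists_strictMono_tendsto_pi (fun n (t : J) => K (φ₁ n) t)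
    fun n t => hKX _ _
  have hlim : ∀ t, ∃ C : Compacts α, (C : Set α) ⊆ X ∧
      Tendsto (fun n => K (φ₁ (φ₂ n)) t) atTop (𝓝 C) := by
    intro t
    by_cases ht : t ∈ J
    · exact ⟨L₁ ⟨t, ht⟩, hL₁ _⟩
    have ht' : ∀ ε ≠ 0, t ∉ jumpSet L₀ ε := fun ε hε htε => by
      obtain ⟨n, hn⟩ := ENNReal.exists_inv_nat_lt hε
      exact ht (Set.mem_iUnion.2 ⟨n, jumpSet_anti L₀ hn.le htε⟩)
    obtain ⟨q₀, hq₀⟩ := exists_rat_gt t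
    let C : Compacts α := ⟨⋂ (q : ℚ) (_ : t < q), L₀ q, (L₀ q₀).isCompact.of_isClosed_subset
      (isClosed_biInter fun q _ => (L₀ q).isCompact.isClosed) (Set.iInter₂_subset q₀ hq₀)⟩
    refine ⟨C, (Set.iInter₂_subset q₀ hq₀).trans (hL₀ q₀).1,
      tendsto_of_forall_notMem_jumpSet (fun n => hK _)
        (fun q => (hL₀ q).2.comp hφ₂.tendsto_atTop) ht' fun q => ⟨fun hq => ?_, fun hq => ?_⟩⟩
    · exact Set.subset_iInter₂ fun q' hq' => hL₀_mono (Rat.cast_lt.1 (hq.trans hq')).le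
    · exact Set.iInter₂_subset q hq
  choose L hLX hL using hlim
  exact ⟨φ₁ ∘ φ₂, hφ₁.comp hφ₂, L, hLX,
    fun s t hst => le_of_tendsto_of_tendsto' (hL s) (hL t) fun n => hK _ hst, hL⟩

end TopologicalSpace.Compacts

theorem distIn_nonneg (Ω : Set E2) (x : E2) (S : Set E2) : 0 ≤ distIn Ω x S := by
  unfold distIn
  split_ifs
  exacts [diam_nonneg, infDist_nonneg]

theorem hausDistIn_nonneg (Ω A B : Set E2) : 0 ≤ hausDistIn Ω A B :=
  le_max_of_le_left <| Real.sSup_nonneg <| by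
    rintro _ ⟨x, -, rfl⟩
    exact distIn_nonneg Ω x B

theorem distIn_le_hausdorffDist_of_mem {Ω A B : Set E2} {x : E2} (hx : x ∈ A)
    (h : hausdorffEDist A B ≠ ⊤) : distIn Ω x B ≤ hausdorffDist A B := by
  have hB : B ≠ ∅ := by
    rintro rfl
    exact h (hausdorffEDist_empty ⟨x, hx⟩)
  rw [distIn, if_neg hB]
  exact infDist_le_hausdorffDist_of_mem hx h

theorem hausDistIn_le_hausdorffDist {Ω A B : Set E2} (h : hausdorffEDist A B ≠ ⊤) :
    hausDistIn Ω A B ≤ hausdorffDist A B := by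
  refine max_le (Real.sSup_le ?_ hausdorffDist_nonneg) (Real.sSup_le ?_ hausdorffDist_nonneg)
  · rintro _ ⟨x, hx, rfl⟩
    exact distIn_le_hausdorffDist_of_mem hx h
  · rintro _ ⟨x, hx, rfl⟩
    rw [hausdorffDist_comm]
    exact distIn_le_hausdorffDist_of_mem hx (by rwa [hausdorffEDist_comm])

theorem tendstoHausdorff_of_tendsto {Ω : Set E2} {A : ℕ → Compacts E2} {C : Compacts E2}
    (h : Tendsto A atTop (𝓝 C)) : TendstoHausdorff Ω (fun n => A n) C := by
  have hE : Tendsto (fun n => hausdorffEDist (A n : Set E2) C) atTop (𝓝 0) :=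
    tendsto_iff_edist_tendsto_0.1 h
  refine squeeze_zero' (.of_forall fun n => hausDistIn_nonneg _ _ _)
    ((hE.eventually_ne ENNReal.zero_ne_top).mono fun n => hausDistIn_le_hausdorffDist) ?_
  exact (ENNReal.tendsto_toReal ENNReal.zero_ne_top).comp hE

theorem helly_compact_valued_general (Ω : Set E2) (hΩb : Bornology.IsBounded Ω)
    (K : ℕ → ℝ → Set E2)
    (hKc : ∀ n, ∀ t ∈ Set.Icc (0:ℝ) 1, IsCompact (K n t) ∧ K n t ⊆ closure Ω)
    (hKmono : ∀ n, ∀ s ∈ Set.Icc (0:ℝ) 1, ∀ t ∈ Set.Icc (0:ℝ) 1, s ≤ t → K n s ⊆ K n t) :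
    ∃ (φ : ℕ → ℕ), StrictMono φ ∧
      ∃ L : ℝ → Set E2,
        (∀ t ∈ Set.Icc (0:ℝ) 1, IsCompact (L t) ∧ L t ⊆ closure Ω) ∧
        (∀ s ∈ Set.Icc (0:ℝ) 1, ∀ t ∈ Set.Icc (0:ℝ) 1, s ≤ t → L s ⊆ L t) ∧
        ∀ t ∈ Set.Icc (0:ℝ) 1, TendstoHausdorff Ω (fun j => K (φ j) t) (L t) := by
  let c : ℝ → Set.Icc (0:ℝ) 1 := Set.projIcc 0 1 zero_le_one
  let K' : ℕ → ℝ → Compacts E2 := fun n t => ⟨K n (c t), (hKc n _ (c t).2).1⟩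
  obtain ⟨φ, hφ, L, hLΩ, hL_mono, hL⟩ := Compacts.exists_strictMono_tendsto_of_monotone
    hΩb.isCompact_closure K' (fun n t => (hKc n _ (c t).2).2)
    fun n s t hst => hKmono n _ (c s).2 _ (c t).2 (Set.monotone_projIcc _ hst)
  refine ⟨φ, hφ, fun t => L t, fun t _ => ⟨(L t).isCompact, hLΩ t⟩,
    fun s _ t _ hst => hL_mono hst, fun t ht => ?_⟩
  simpa [K', c, Set.projIcc_of_mem _ ht] using tendstoHausdorff_of_tendsto (Ω := Ω) (hL t)

/-- Helly's theorem for compact-valued increasing functions: every sequence of increasing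
functions from `[0,1]` into the compact subsets of `closure Ω` has a subsequence converging
pointwise in the Hausdorff metric to an increasing compact-valued function. -/
theorem helly_compact_valued (Ω : Set E2) (hΩo : IsOpen Ω) (hΩb : Bornology.IsBounded Ω)
    (K : ℕ → ℝ → Set E2)
    (hKc : ∀ n, ∀ t ∈ Set.Icc (0:ℝ) 1, IsCompact (K n t) ∧ K n t ⊆ closure Ω)
    (hKmono : ∀ n, ∀ s ∈ Set.Icc (0:ℝ) 1, ∀ t ∈ Set.Icc (0:ℝ) 1, s ≤ t → K n s ⊆ K n t) :
    ∃ (φ : ℕ → ℕ), StrictMono φ ∧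
      ∃ L : ℝ → Set E2,
        (∀ t ∈ Set.Icc (0:ℝ) 1, IsCompact (L t) ∧ L t ⊆ closure Ω) ∧
        (∀ s ∈ Set.Icc (0:ℝ) 1, ∀ t ∈ Set.Icc (0:ℝ) 1, s ≤ t → L s ⊆ L t) ∧
        ∀ t ∈ Set.Icc (0:ℝ) 1, TendstoHausdorff Ω (fun j => K (φ j) t) (L t) :=
  helly_compact_valued_general Ω hΩb K hKc hKmono
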